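/- arXiv:2402.09401 — 4 statements merged into one kernel-verified Lean document; each statement's English description precedes it below -/
import Mathlib

section
/- Let $\{\phi_i\}_{i=1}^t$ be a sequence in $\mathbb{R}^d$ with $\|\phi_i\|_2 \le L$, let $\lambda > 0$, and define $U_i = \lambda I + \sum_{j=1}^i \phi_j \phi_j^\top$. Then $\sum_{i=1}^t \min\{1, \phi_i^\top U_{i-1}^{-1} \phi_i\} \le 2d \log\big((\lambda d + t L^2)/(\lambda d)\big)$. -/
open Matrix

private lemma aux_min_le_log (x : ℝ) (hx : 0 ≤ x) : min 1 x ≤ 2 * Real.log (1 + x) := by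
  rcases le_total x 1 with h | h
  · rw [min_eq_right h]
    have h1 : (0:ℝ) < 1 + x := by linarith
    have := Real.log_le_sub_one_of_pos (x := (1+x)⁻¹) (by positivity)
    rw [Real.log_inv] at this
    have hinv : (1+x) * (1+x)⁻¹ = 1 := mul_inv_cancel₀ h1.ne'
    nlinarith
  · rw [min_eq_left h]
    have : Real.log 2 ≤ Real.log (1 + x) := Real.log_le_log (by norm_num) (by linarith)
    nlinarith [Real.log_two_gt_d9]

private lemma aux_vecMulVec_psd (d : ℕ) (u : Fin d → ℝ) : (vecMulVec u u).PosSemidef := by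
  rw [vecMulVec_eq Unit]
  have : replicateCol Unit u = (replicateRow Unit u)ᴴ := by ext i j; simp
  rw [this]
  exact posSemidef_conjTranspose_mul_self _

private lemma aux_det_step (d : ℕ) (A : Matrix (Fin d) (Fin d) ℝ) (hA : A.PosDef)
    (u : Fin d → ℝ) : (A + vecMulVec u u).det = A.det * (1 + u ⬝ᵥ A⁻¹ *ᵥ u) := by
  rw [vecMulVec_eq Unit, Matrix.det_add_replicateCol_mul_replicateRow (isUnit_iff_ne_zero.mpr hA.det_pos.ne') u u]
  congr 1
  rw [Matrix.det_unique]
  simp only [Matrix.mul_apply, Matrix.add_apply, Matrix.one_apply_eq, Matrix.replicateRow_apply,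
    Matrix.replicateCol_apply, dotProduct, Matrix.mulVec, Matrix.of_apply, Finset.sum_mul,
    Finset.mul_sum]
  rw [Finset.sum_comm]
  ring_nf

private lemma aux_trace_eq_sum_eigenvalues (d : ℕ) {A : Matrix (Fin d) (Fin d) ℝ}
    (hA : A.IsHermitian) : A.trace = ∑ i, hA.eigenvalues i := by
  nth_rewrite 1 [hA.spectral_theorem]
  rw [Unitary.conjStarAlgAut_apply, Matrix.trace_mul_cycle]
  rw [(Matrix.mem_unitaryGroup_iff').mp (Matrix.IsHermitian.eigenvectorUnitary hA).2,
    Matrix.one_mul]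
  simp [Matrix.trace_diagonal]

theorem stmt_2 (d t : ℕ) (hd : 0 < d) (L lam : ℝ) (hL : 0 ≤ L) (hlam : 0 < lam)
    (φ : ℕ → EuclideanSpace ℝ (Fin d)) (hφ : ∀ i, ‖φ i‖ ≤ L)
    (U : ℕ → Matrix (Fin d) (Fin d) ℝ)
    (hU : ∀ i, U i = lam • (1 : Matrix (Fin d) (Fin d) ℝ) +
      ∑ j ∈ Finset.range i, vecMulVec (φ j) (φ j)) :
    ∑ i ∈ Finset.range t, min 1 (φ i ⬝ᵥ (U i)⁻¹ *ᵥ φ i) ≤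
      2 * d * Real.log ((lam * d + t * L ^ 2) / (lam * d)) := by
  set x : ℕ → ℝ := fun i => φ i ⬝ᵥ (U i)⁻¹ *ᵥ φ i with hx
  -- positive definiteness
  have hPD : ∀ i, (U i).PosDef := by
    intro i
    rw [hU i]
    apply Matrix.PosDef.add_posSemidef
    · have h : lam • (1 : Matrix (Fin d) (Fin d) ℝ) = Matrix.diagonal (fun _ => lam) := by
        ext i j; by_cases hij : i = j <;> simp [Matrix.one_apply, Matrix.diagonal_apply, hij]
      rw [h]
      exact Matrix.PosDef.diagonal (fun _ => hlam)
    · exact Finset.sum_induction _ _ (fun a b ha hb => ha.add hb) (Matrix.PosSemidef.zero)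
        (fun j _ => aux_vecMulVec_psd d (φ j))
  have hdet_pos : ∀ i, 0 < (U i).det := fun i => (hPD i).det_pos
  have hx0 : ∀ i, 0 ≤ x i := by
    intro i
    have := ((hPD i).inv).posSemidef.re_dotProduct_nonneg (φ i)
    simpa using this
  -- determinant recursion
  have hstep : ∀ i, (U (i+1)).det = (U i).det * (1 + x i) := by
    intro i
    have h1 : U (i+1) = U i + vecMulVec (φ i) (φ i) := by
      rw [hU (i+1), Finset.sum_range_succ, ← add_assoc, ← hU i]
    rw [h1, aux_det_step d (U i) (hPD i) (φ i)]
  have hlog : ∀ i, Real.log (1 + x i) =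
      Real.log (U (i+1)).det - Real.log (U i).det := by
    intro i
    rw [hstep i, Real.log_mul (hdet_pos i).ne' (by have := hx0 i; positivity)]
    ring
  -- first bound
  have h1 : ∑ i ∈ Finset.range t, min 1 (x i) ≤
      2 * (Real.log (U t).det - Real.log (U 0).det) := by
    calc ∑ i ∈ Finset.range t, min 1 (x i)
        ≤ ∑ i ∈ Finset.range t, 2 * Real.log (1 + x i) :=
          Finset.sum_le_sum (fun i _ => aux_min_le_log (x i) (hx0 i))
      _ = 2 * ∑ i ∈ Finset.range t, (Real.log (U (i+1)).det - Real.log (U i).det) := by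
          rw [Finset.mul_sum]; exact Finset.sum_congr rfl (fun i _ => by rw [hlog i])
      _ = 2 * (Real.log (U t).det - Real.log (U 0).det) := by
          rw [Finset.sum_range_sub (fun i => Real.log (U i).det)]
  -- det U 0
  have hU0 : Real.log (U 0).det = d * Real.log lam := by
    have : U 0 = lam • (1 : Matrix (Fin d) (Fin d) ℝ) := by simp [hU 0]
    rw [this, Matrix.det_smul, Matrix.det_one, mul_one]
    simp [Real.log_pow]
  -- trace bound
  set S : ℝ := lam * d + t * L ^ 2 with hS
  have hS_pos : 0 < S := by positivity
  have htr : (U t).trace ≤ S := by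
    rw [hU t, Matrix.trace_add, Matrix.trace_sum]
    have h2 : (lam • (1 : Matrix (Fin d) (Fin d) ℝ)).trace = lam * d := by
      simp [Matrix.trace_smul, Matrix.trace_one, mul_comm]
    rw [h2, hS]
    gcongr lam * d + ?_
    have h3 : ∀ j, (vecMulVec (φ j : Fin d → ℝ) (φ j)).trace ≤ L ^ 2 := by
      intro j
      have h4 : (vecMulVec (φ j : Fin d → ℝ) (φ j)).trace = ‖φ j‖ ^ 2 := by
        simp only [Matrix.trace, Matrix.diag, vecMulVec_apply]
        rw [EuclideanSpace.norm_eq, Real.sq_sqrt (by positivity)]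
        simp [sq]
      rw [h4]
      exact pow_le_pow_left₀ (norm_nonneg _) (hφ j) 2
    calc ∑ j ∈ Finset.range t, (vecMulVec (φ j : Fin d → ℝ) (φ j)).trace
        ≤ ∑ j ∈ Finset.range t, L ^ 2 := Finset.sum_le_sum (fun j _ => h3 j)
      _ = t * L ^ 2 := by simp [mul_comm]
  have htr_lam : lam * d ≤ (U t).trace := by
    rw [hU t, Matrix.trace_add]
    have h2 : (lam • (1 : Matrix (Fin d) (Fin d) ℝ)).trace = lam * d := by
      simp [Matrix.trace_smul, Matrix.trace_one, mul_comm]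
    rw [h2]
    have : 0 ≤ (∑ j ∈ Finset.range t, vecMulVec (φ j : Fin d → ℝ) (φ j)).trace := by
      rw [Matrix.trace_sum]
      apply Finset.sum_nonneg
      intro j _
      simp only [Matrix.trace, Matrix.diag, vecMulVec_apply]
      exact Finset.sum_nonneg fun i _ => mul_self_nonneg _
    linarith
  -- eigenvalue AM-GM
  have hH : (U t).IsHermitian := (hPD t).1
  set μ : Fin d → ℝ := hH.eigenvalues with hμdef
  have hμpos : ∀ i, 0 < μ i := fun i => (hPD t).eigenvalues_pos i
  have hdet_eq : (U t).det = ∏ i, μ i := by simpa using hH.det_eq_prod_eigenvalues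
  have htr_eq : (U t).trace = ∑ i, μ i := aux_trace_eq_sum_eigenvalues d hH
  have hP_pos : 0 < ∏ i, μ i := Finset.prod_pos (fun i _ => hμpos i)
  have hAM : (∏ i, μ i) ^ ((d:ℝ)⁻¹) ≤ (∑ i, μ i) / d := by
    have := Real.geom_mean_le_arith_mean Finset.univ (fun _ => 1) μ (fun _ _ => zero_le_one)
      (by simp; positivity) (fun i _ => (hμpos i).le)
    simpa using this
  have hSd_pos : (0:ℝ) < S / d := by positivity
  have hAM2 : (∏ i, μ i) ^ ((d:ℝ)⁻¹) ≤ S / d := by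
    refine hAM.trans ?_
    rw [← htr_eq]
    exact div_le_div_of_nonneg_right htr (by positivity)
  have hlogdet : Real.log (U t).det ≤ d * Real.log (S / d) := by
    rw [hdet_eq]
    have h5 : Real.log ((∏ i, μ i) ^ ((d:ℝ)⁻¹)) = (d:ℝ)⁻¹ * Real.log (∏ i, μ i) :=
      Real.log_rpow hP_pos _
    have h6 : Real.log ((∏ i, μ i) ^ ((d:ℝ)⁻¹)) ≤ Real.log (S / d) :=
      Real.log_le_log (Real.rpow_pos_of_pos hP_pos _) hAM2
    rw [h5] at h6
    have hd' : (0:ℝ) < d := by exact_mod_cast hd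
    calc Real.log (∏ i, μ i) = d * ((d:ℝ)⁻¹ * Real.log (∏ i, μ i)) := by
          field_simp
      _ ≤ d * Real.log (S / d) := by
          apply mul_le_mul_of_nonneg_left h6 hd'.le
  -- assemble
  have hfinal : Real.log (S / (lam * d)) = Real.log (S / d) - Real.log lam := by
    have : S / (lam * d) = (S / d) / lam := by
      rw [div_div, mul_comm]
    rw [this, Real.log_div hSd_pos.ne' hlam.ne']
  calc ∑ i ∈ Finset.range t, min 1 (x i)
      ≤ 2 * (Real.log (U t).det - Real.log (U 0).det) := h1
    _ ≤ 2 * (d * Real.log (S / d) - d * Real.log lam) := by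
        rw [hU0]; linarith [hlogdet]
    _ = 2 * d * Real.log (S / (lam * d)) := by rw [hfinal]; ring
end

section
/- Let $\{\phi_i\}_{i\ge 1}$ be a sequence in $\mathbb{R}^d$, $U$ a $d\times d$ positive definite matrix, and $U_t = U + \sum_{i=1}^t \phi_i \phi_i^\top$. If $\|\phi_i\|_2 \le L$ for all $i$ and $\lambda_{\min}(U) \ge \max(1, L^2)$, then $\sum_{i=1}^t \phi_i^\top U_{i-1}^{-1} \phi_i \le 2\log\big(\det(U_t)/\det(U)\big)$. -/
open Matrix

private lemma psd_outer {d : ℕ} (v : Fin d → ℝ) : (vecMulVec v v).PosSemidef := by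
  have h : vecMulVec v v = (replicateRow Unit v)ᴴ * replicateRow Unit v := by
    rw [vecMulVec_eq Unit, conjTranspose_replicateRow]
    simp
  rw [h]
  exact posSemidef_conjTranspose_mul_self _

private lemma det_rank_one {d : ℕ} {A : Matrix (Fin d) (Fin d) ℝ} (hA : IsUnit A.det)
    (u : Fin d → ℝ) :
    (A + vecMulVec u u).det = A.det * (1 + u ⬝ᵥ A⁻¹ *ᵥ u) := by
  rw [vecMulVec_eq Unit, det_add_replicateCol_mul_replicateRow hA]
  congr 1
  rw [det_unique]
  simp only [Matrix.add_apply, one_apply_eq, mul_apply, replicateRow, replicateCol, of_apply, dotProduct, mulVec,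
    Finset.mul_sum, Finset.sum_mul, Finset.univ_unique, Finset.sum_singleton]
  congr 1
  rw [Finset.sum_comm]
  refine Finset.sum_congr rfl fun i _ => Finset.sum_congr rfl fun j _ => by ring

private lemma log_bound {x : ℝ} (h0 : 0 ≤ x) (h1 : x ≤ 1) : x ≤ 2 * Real.log (1 + x) := by
  have hpos : (0:ℝ) < 1 + x := by linarith
  have h := Real.log_le_sub_one_of_pos (x := (1+x)⁻¹) (by positivity)
  rw [Real.log_inv] at h
  have key : x/(1+x) ≤ Real.log (1 + x) := by
    have : 1 - (1+x)⁻¹ = x/(1+x) := by field_simp; ring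
    linarith
  have h2 : x ≤ 2 * (x/(1+x)) := by
    rw [mul_div_assoc', le_div_iff₀ hpos]; nlinarith
  linarith

private lemma dot_self_nonneg' {d : ℕ} (w : Fin d → ℝ) : 0 ≤ w ⬝ᵥ w :=
  Finset.sum_nonneg fun _ _ => mul_self_nonneg _

private lemma quad_bound {d : ℕ} {L : ℝ} {A : Matrix (Fin d) (Fin d) ℝ} (hA : A.PosDef)
    (hsub : (A - max 1 (L ^ 2) • (1 : Matrix (Fin d) (Fin d) ℝ)).PosSemidef)
    (v : EuclideanSpace ℝ (Fin d)) (hv : ‖v‖ ≤ L) :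
    v ⬝ᵥ A⁻¹ *ᵥ v ≤ 1 := by
  set c : ℝ := max 1 (L ^ 2) with hc
  have hc1 : (1:ℝ) ≤ c := le_max_left _ _
  have hcL : L ^ 2 ≤ c := le_max_right _ _
  set w : Fin d → ℝ := A⁻¹ *ᵥ v with hw
  set s : ℝ := v ⬝ᵥ A⁻¹ *ᵥ v with hs
  have hs0 : 0 ≤ s := by
    have := (hA.inv.posSemidef).dotProduct_mulVec_nonneg v
    simpa using this
  have hAw : A *ᵥ w = v := by
    rw [hw, mulVec_mulVec, Matrix.mul_nonsing_inv _ (isUnit_iff_ne_zero.mpr hA.det_pos.ne'),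
      one_mulVec]
  have hquad : w ⬝ᵥ A *ᵥ w = s := by
    rw [hAw, hs, dotProduct_comm, hw]
  have hww : 0 ≤ w ⬝ᵥ w := dot_self_nonneg' w
  have hcs : c * (w ⬝ᵥ w) ≤ s := by
    have h := hsub.dotProduct_mulVec_nonneg w
    simp only [sub_mulVec, dotProduct_sub, smul_mulVec, one_mulVec,
      dotProduct_smul, star_trivial, smul_eq_mul] at h
    linarith [hquad ▸ h]
  have hnorm : (∑ i, v i ^ 2) = ‖v‖ ^ 2 := by
    rw [EuclideanSpace.norm_eq, Real.sq_sqrt (Finset.sum_nonneg fun i _ => sq_nonneg _)]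
    simp [sq_abs]
  have hP : (∑ i, v i ^ 2) ≤ c := by
    have h0 : (0:ℝ) ≤ ‖v‖ := norm_nonneg _
    nlinarith [hnorm]
  have hCS : s ^ 2 ≤ (∑ i, v i ^ 2) * (w ⬝ᵥ w) := by
    have h := Finset.sum_mul_sq_le_sq_mul_sq Finset.univ v w
    have hsw : s = ∑ i, v i * w i := rfl
    have hwws : w ⬝ᵥ w = ∑ i, w i ^ 2 := by simp [dotProduct, sq]
    rw [hsw, hwws]
    exact h
  nlinarith [mul_le_mul_of_nonneg_right hP hww, sq_nonneg (s - 1)]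

theorem stmt_3 (d t : ℕ) (L : ℝ)
    (φ : ℕ → EuclideanSpace ℝ (Fin d)) (hφ : ∀ i, ‖φ i‖ ≤ L)
    (U₀ : Matrix (Fin d) (Fin d) ℝ) (hU₀ : U₀.PosDef)
    (hmin : ((U₀ - max 1 (L ^ 2) • (1 : Matrix (Fin d) (Fin d) ℝ))).PosSemidef)
    (U : ℕ → Matrix (Fin d) (Fin d) ℝ)
    (hU : ∀ i, U i = U₀ + ∑ j ∈ Finset.range i, vecMulVec (φ j) (φ j)) :
    ∑ i ∈ Finset.range t, φ i ⬝ᵥ (U i)⁻¹ *ᵥ φ i ≤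
      2 * Real.log ((U t).det / U₀.det) := by
  have hSpsd : ∀ i, (∑ j ∈ Finset.range i, vecMulVec (φ j) (φ j)).PosSemidef := fun i =>
    Finset.sum_induction _ _ (fun a b ha hb => ha.add hb) (Matrix.PosSemidef.zero)
      (fun j _ => psd_outer (φ j))
  have hUpos : ∀ i, (U i).PosDef := fun i => by
    rw [hU i]; exact hU₀.add_posSemidef (hSpsd i)
  have hUsub : ∀ i, ((U i) - max 1 (L ^ 2) • (1 : Matrix (Fin d) (Fin d) ℝ)).PosSemidef := by
    intro i
    have heq : (U i) - max 1 (L ^ 2) • (1 : Matrix (Fin d) (Fin d) ℝ) =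
        (U₀ - max 1 (L ^ 2) • (1 : Matrix (Fin d) (Fin d) ℝ)) +
          ∑ j ∈ Finset.range i, vecMulVec (φ j) (φ j) := by
      rw [hU i]; abel
    rw [heq]
    exact hmin.add (hSpsd i)
  have hx0 : ∀ i, 0 ≤ φ i ⬝ᵥ (U i)⁻¹ *ᵥ φ i := fun i => by
    have := ((hUpos i).inv.posSemidef).dotProduct_mulVec_nonneg (φ i)
    simpa using this
  have hx1 : ∀ i, φ i ⬝ᵥ (U i)⁻¹ *ᵥ φ i ≤ 1 := fun i =>
    quad_bound (hUpos i) (hUsub i) (φ i) (hφ i)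
  have hdet : ∀ i, (U (i + 1)).det = (U i).det * (1 + φ i ⬝ᵥ (U i)⁻¹ *ᵥ φ i) := by
    intro i
    have hstep : U (i + 1) = U i + vecMulVec (φ i) (φ i) := by
      rw [hU (i + 1), Finset.sum_range_succ, ← add_assoc, ← hU i]
    rw [hstep, det_rank_one (isUnit_iff_ne_zero.mpr (hUpos i).det_pos.ne') (φ i)]
  induction t with
  | zero =>
    rw [hU 0]
    simp [div_self hU₀.det_pos.ne']
  | succ t ih =>
    rw [Finset.sum_range_succ]
    have hlog : Real.log ((U (t + 1)).det / U₀.det) =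
        Real.log ((U t).det / U₀.det) + Real.log (1 + φ t ⬝ᵥ (U t)⁻¹ *ᵥ φ t) := by
      have hx := hx0 t
      have heq : (U t).det * (1 + φ t ⬝ᵥ (U t)⁻¹ *ᵥ φ t) / U₀.det =
          ((U t).det / U₀.det) * (1 + φ t ⬝ᵥ (U t)⁻¹ *ᵥ φ t) := by ring
      rw [hdet t, heq,
        Real.log_mul (div_ne_zero (hUpos t).det_pos.ne' hU₀.det_pos.ne') (by positivity)]
    rw [hlog]
    have := log_bound (hx0 t) (hx1 t)
    linarith
end

section
/- Fix an uncertainty threshold $0 < \Gamma \le 1$ and constants $L, B \ge 1$. Let $\{\phi_t\}_{t \in C}$ be a collection of vectors in $\mathbb{R}^d$ indexed by a finite set $C \subseteq \{1,\dots,T\}$ with $\|\phi_t\|_2 \le L$, and with $\lambda = B^{-2}$ define $\Sigma_t = \lambda I + \sum_{\tau \in C, \tau \le t} \phi_\tau \phi_\tau^\top$. Suppose that for every $t \in C$ we have $\phi_t^\top \Sigma_{t-1}^{-1} \phi_t \ge \Gamma^2$. Then $|C| \le 16 d \Gamma^{-2} \log(3 L B \Gamma^{-1})$. -/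
open Matrix

lemma vmv_psd {d : ℕ} (u : Fin d → ℝ) : (vecMulVec u u).PosSemidef := by
  rw [vecMulVec_eq Unit]
  have h : (Matrix.replicateRow Unit u) = (Matrix.replicateCol Unit u)ᴴ := by
    ext i j; simp [conjTranspose_apply]
  rw [h]
  exact posSemidef_self_mul_conjTranspose _

lemma trace_vmv {d : ℕ} (u : Fin d → ℝ) : (vecMulVec u u).trace = ∑ i, u i ^ 2 := by
  simp [Matrix.trace, Matrix.diag, vecMulVec_apply, sq]

lemma trace_eq_sum_eig {d : ℕ} {A : Matrix (Fin d) (Fin d) ℝ} (hA : A.IsHermitian) :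
    A.trace = ∑ i, hA.eigenvalues i := by
  nth_rewrite 1 [hA.spectral_theorem]
  rw [Unitary.conjStarAlgAut_apply, trace_mul_cycle]
  have : (star (hA.eigenvectorUnitary : Matrix (Fin d) (Fin d) ℝ)) *
      (hA.eigenvectorUnitary : Matrix (Fin d) (Fin d) ℝ) = 1 :=
    (Matrix.mem_unitaryGroup_iff').mp (hA.eigenvectorUnitary).2
  rw [this, one_mul, trace_diagonal]
  simp

lemma det_le_trace_pow {d : ℕ} (hd : 0 < d) {A : Matrix (Fin d) (Fin d) ℝ}
    (hA : A.PosDef) : A.det ≤ (A.trace / d) ^ d := by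
  have hH := hA.isHermitian
  set μ := hH.eigenvalues with hμ
  have h0 : ∀ i ∈ Finset.univ, (0:ℝ) ≤ μ i := fun i _ => (hA.eigenvalues_pos i).le
  have hdet : A.det = ∏ i, μ i := by
    have := hH.det_eq_prod_eigenvalues
    simpa using this
  have htr : A.trace = ∑ i, μ i := trace_eq_sum_eig hH
  have hd' : (d:ℝ) ≠ 0 := Nat.cast_ne_zero.mpr hd.ne'
  have key := Real.geom_mean_le_arith_mean_weighted Finset.univ (fun _ => 1/(d:ℝ)) μ
    (fun i _ => by positivity) (by simp [Finset.card_univ]; field_simp) h0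
  have h2 : (∏ i, μ i ^ ((1:ℝ)/d)) ^ d ≤ (∑ i, (1/(d:ℝ)) * μ i) ^ d :=
    pow_le_pow_left₀ (Finset.prod_nonneg fun i _ => Real.rpow_nonneg (h0 i (Finset.mem_univ i)) _) key d
  have h3 : (∏ i, μ i ^ ((1:ℝ)/d)) ^ d = ∏ i, μ i := by
    rw [← Finset.prod_pow]
    congr 1; ext i
    rw [← Real.rpow_natCast (μ i ^ ((1:ℝ)/d)) d, ← Real.rpow_mul (h0 i (Finset.mem_univ i))]
    rw [one_div, inv_mul_cancel₀ hd', Real.rpow_one]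
  have h4 : (∑ i, (1/(d:ℝ)) * μ i) = A.trace / d := by
    rw [← Finset.mul_sum, htr]; ring
  rw [hdet, ← h3]
  calc (∏ i, μ i ^ ((1:ℝ)/d)) ^ d ≤ (∑ i, (1/(d:ℝ)) * μ i) ^ d := h2
    _ = (A.trace / d) ^ d := by rw [h4]

lemma det_add_vmv {d : ℕ} {A : Matrix (Fin d) (Fin d) ℝ} (hA : A.PosDef) (u : Fin d → ℝ) :
    (A + vecMulVec u u).det = A.det * (1 + u ⬝ᵥ A⁻¹ *ᵥ u) := by
  rw [vecMulVec_eq Unit, det_add_replicateCol_mul_replicateRow (isUnit_iff_ne_zero.mpr hA.det_pos.ne') u u]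
  congr 1
  rw [det_unique]
  simp [Matrix.mul_apply, dotProduct, Matrix.mulVec, Finset.mul_sum, mul_comm]
  refine Finset.sum_congr rfl fun x _ => Finset.sum_congr rfl fun i _ => ?_
  have h := hA.isHermitian.inv.apply i x
  simp only [star_trivial] at h
  rw [h]

set_option maxHeartbeats 1000000 in
lemma arith_final (d n Γ L B : ℝ) (hd : 1 ≤ d) (hn0 : 0 ≤ n) (hΓ0 : 0 < Γ) (hΓ1 : Γ ≤ 1)
    (hL : 1 ≤ L) (hB : 1 ≤ B)
    (h : n * Γ^2 / 2 ≤ d * Real.log (1 + n*L^2*B^2/d)) :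
    n ≤ 16 * d * Γ⁻¹^2 * Real.log (3*L*B*Γ⁻¹) := by
  have hΓ2 : (0:ℝ) < Γ^2 := by positivity
  have hd0 : (0:ℝ) < d := lt_of_lt_of_le one_pos hd
  have hΓ21 : Γ^2 ≤ 1 := by nlinarith
  set K : ℝ := 3*L*B*Γ⁻¹ with hKdef
  have hΓinv : 1 ≤ Γ⁻¹ := (one_le_inv₀ hΓ0).mpr hΓ1
  have hLB : 1 ≤ L*B := by nlinarith
  have hK3 : 3 ≤ K := by nlinarith
  have hlogK : 1 < Real.log K := by
    rw [← Real.log_exp 1]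
    apply Real.log_lt_log (Real.exp_pos 1)
    calc Real.exp 1 < 2.7182818286 := Real.exp_one_lt_d9
      _ < 3 := by norm_num
      _ ≤ K := hK3
  by_contra hc
  push_neg at hc
  set y : ℝ := n * Γ^2 / d with hy
  have hny : y * d = n * Γ^2 := by rw [hy]; field_simp
  have hyK : 16 * Real.log K < y := by
    have e : Γ⁻¹^2 * Γ^2 = 1 := by
      rw [inv_pow]; exact inv_mul_cancel₀ (by positivity)
    have h2 := mul_lt_mul_of_pos_right hc (show (0:ℝ) < Γ^2/d by positivity)
    calc 16 * Real.log K = 16 * Real.log K * (Γ⁻¹^2 * Γ^2) * (d / d) := by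
          rw [e, div_self hd0.ne']; ring
      _ = 16 * d * Γ⁻¹^2 * Real.log K * (Γ^2/d) := by ring
      _ < n * (Γ^2/d) := h2
      _ = y := by rw [hy]; ring
  have hy16 : 16 < y := by nlinarith
  have hnd : d ≤ n := by
    nlinarith [mul_le_of_le_one_right hn0 hΓ21, mul_pos (show (0:ℝ) < y - 16 by linarith) hd0]
  have hn : 0 < n := lt_of_lt_of_le hd0 hnd
  have hLB1 : 1 ≤ L^2 * B^2 := by nlinarith
  have hw1 : 1 ≤ n * L^2 * B^2 / d := by
    rw [le_div_iff₀ hd0]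
    nlinarith
  have h1 : y / 2 ≤ Real.log (1 + n*L^2*B^2/d) := by
    rw [hy, div_div, div_le_iff₀ (by positivity)]
    rw [div_le_iff₀ (by positivity)] at h
    nlinarith
  have h2 : Real.log (1 + n*L^2*B^2/d) ≤ Real.log (y * (2*L^2*B^2/Γ^2)) := by
    apply Real.log_le_log (by linarith)
    have e2 : y * (2*L^2*B^2/Γ^2) = 2 * (n*L^2*B^2/d) := by
      rw [hy]
      field_simp
    rw [e2]; linarith
  have hc0 : (0:ℝ) < 2*L^2*B^2/Γ^2 := by positivity
  have h3 : Real.log (y * (2*L^2*B^2/Γ^2)) = Real.log y + Real.log (2*L^2*B^2/Γ^2) :=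
    Real.log_mul (by linarith) hc0.ne'
  have h4 : Real.log (2*L^2*B^2/Γ^2) ≤ 2 * Real.log K := by
    have eK : K^2 = 9*L^2*B^2/Γ^2 := by
      rw [hKdef]
      field_simp
      ring
    have hK2 : 2*L^2*B^2/Γ^2 ≤ K^2 := by
      rw [eK]
      exact div_le_div_of_nonneg_right (by nlinarith) hΓ2.le
    calc Real.log (2*L^2*B^2/Γ^2) ≤ Real.log (K^2) := Real.log_le_log hc0 hK2
      _ = 2 * Real.log K := by
          rw [Real.log_pow]; push_cast; ring
  have h5 : Real.log y ≤ y/8 + (3 * Real.log 2 - 1) := by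
    have h5a := Real.log_le_sub_one_of_pos (show (0:ℝ) < y/8 by linarith)
    rw [Real.log_div (by linarith) (by norm_num),
      show (8:ℝ) = 2^3 by norm_num, Real.log_pow] at h5a
    push_cast at h5a
    linarith
  have h6 : 2 * Real.log K < y/8 := by linarith
  have hlog2 := Real.log_two_lt_d9
  linarith

set_option maxHeartbeats 1000000 in
theorem stmt_4 (d T : ℕ) (hd : 0 < d) (Γ L B : ℝ)
    (hΓ0 : 0 < Γ) (hΓ1 : Γ ≤ 1) (hL : 1 ≤ L) (hB : 1 ≤ B)
    (C : Finset ℕ) (hC : C ⊆ Finset.Icc 1 T)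
    (φ : ℕ → EuclideanSpace ℝ (Fin d)) (hφ : ∀ t ∈ C, ‖φ t‖ ≤ L)
    (lam : ℝ) (hlam : lam = B⁻¹ ^ 2)
    (Sig : ℕ → Matrix (Fin d) (Fin d) ℝ)
    (hSig : ∀ t, Sig t = lam • (1 : Matrix (Fin d) (Fin d) ℝ) +
      ∑ τ ∈ C.filter (· ≤ t), vecMulVec (φ τ) (φ τ))
    (hthres : ∀ t ∈ C, φ t ⬝ᵥ (Sig (t - 1))⁻¹ *ᵥ φ t ≥ Γ ^ 2) :
    (C.card : ℝ) ≤ 16 * d * Γ⁻¹ ^ 2 * Real.log (3 * L * B * Γ⁻¹) := by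
  have hB0 : (0:ℝ) < B := lt_of_lt_of_le one_pos hB
  have hlam0 : 0 < lam := by rw [hlam]; positivity
  have hΓ2 : (0:ℝ) < Γ^2 := by positivity
  have hd0 : (0:ℝ) < (d:ℝ) := by exact_mod_cast hd
  -- positive definiteness
  have hPSDsum : ∀ (s : Finset ℕ),
      (∑ τ ∈ s, vecMulVec (φ τ) (φ τ) : Matrix (Fin d) (Fin d) ℝ).PosSemidef := by
    intro s
    induction s using Finset.induction with
    | empty => simpa using Matrix.PosSemidef.zero
    | insert _ _ h ih =>
      rw [Finset.sum_insert h]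
      exact (vmv_psd _).add ih
  have hpos : ∀ t, (Sig t).PosDef := by
    intro t
    rw [hSig t]
    have h1 : (lam • (1 : Matrix (Fin d) (Fin d) ℝ)).PosDef := by
      rw [smul_one_eq_diagonal]
      exact posDef_diagonal_iff.mpr (fun _ => hlam0)
    exact h1.add_posSemidef (hPSDsum _)
  -- base case facts
  have hfilter0 : C.filter (· ≤ 0) = ∅ := by
    apply Finset.filter_false_of_mem
    intro τ hτ
    have := (Finset.mem_Icc.mp (hC hτ)).1
    omega
  -- lower bound by induction
  have hstep : ∀ t : ℕ, lam ^ d * (1+Γ^2) ^ (C.filter (· ≤ t)).card ≤ (Sig t).det := by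
    intro t
    induction t with
    | zero =>
      rw [hfilter0, hSig 0, hfilter0]
      simp [Matrix.det_smul]
    | succ t ih =>
      by_cases hm : t+1 ∈ C
      · have hins : C.filter (· ≤ t+1) = insert (t+1) (C.filter (· ≤ t)) := by
          ext τ
          simp only [Finset.mem_filter, Finset.mem_insert]
          constructor
          · rintro ⟨h1, h2⟩
            rcases Nat.eq_or_lt_of_le h2 with h3 | h3
            · exact Or.inl h3
            · exact Or.inr ⟨h1, by omega⟩
          · rintro (rfl | ⟨h1, h2⟩)
            · exact ⟨hm, le_refl _⟩
            · exact ⟨h1, by omega⟩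
        have hnotmem : t+1 ∉ C.filter (· ≤ t) := by simp
        have hSigstep : Sig (t+1) = Sig t + vecMulVec (φ (t+1)) (φ (t+1)) := by
          rw [hSig (t+1), hSig t, hins, Finset.sum_insert hnotmem]
          abel
        have hdetstep := det_add_vmv (hpos t) (φ (t+1))
        have hth' : Γ^2 ≤ φ (t+1) ⬝ᵥ (Sig t)⁻¹ *ᵥ φ (t+1) := by
          have := hthres (t+1) hm
          simpa using this
        rw [hins, Finset.card_insert_of_notMem hnotmem, hSigstep, hdetstep]
        rw [pow_succ, ← mul_assoc]
        apply mul_le_mul ih (by linarith) (by positivity) (hpos t).det_pos.le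
      · have heq : C.filter (· ≤ t+1) = C.filter (· ≤ t) := by
          ext τ
          simp only [Finset.mem_filter]
          constructor
          · rintro ⟨h1, h2⟩
            have hne : τ ≠ t+1 := fun h => hm (h ▸ h1)
            exact ⟨h1, by omega⟩
          · rintro ⟨h1, h2⟩
            exact ⟨h1, by omega⟩
        have hSe : Sig (t+1) = Sig t := by rw [hSig (t+1), hSig t, heq]
        rw [heq, hSe]
        exact ih
  have hfilterT : C.filter (· ≤ T) = C := by
    apply Finset.filter_true_of_mem
    intro τ hτ
    exact (Finset.mem_Icc.mp (hC hτ)).2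
  have hlow : lam ^ d * (1+Γ^2) ^ C.card ≤ (Sig T).det := by
    have := hstep T
    rwa [hfilterT] at this
  -- trace bound
  have htrb : (Sig T).trace ≤ lam * d + C.card * L^2 := by
    rw [hSig T, hfilterT, Matrix.trace_add, Matrix.trace_smul, Matrix.trace_one,
      Matrix.trace_sum, smul_eq_mul]
    have hb : ∀ τ ∈ C, (vecMulVec (φ τ) (φ τ)).trace ≤ L^2 := by
      intro τ hτ
      rw [trace_vmv]
      have hnorm := hφ τ hτ
      have he : ∑ i, (φ τ) i ^2 = ‖φ τ‖^2 := by
        rw [EuclideanSpace.norm_eq, Real.sq_sqrt (by positivity)]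
        simp [sq_abs]
      rw [he]
      nlinarith [norm_nonneg (φ τ)]
    calc lam * (Fintype.card (Fin d) : ℝ) + ∑ τ ∈ C, (vecMulVec (φ τ) (φ τ)).trace
        ≤ lam * d + ∑ τ ∈ C, L^2 := by
          rw [Fintype.card_fin]
          exact add_le_add_right (Finset.sum_le_sum hb) _
      _ = lam * d + C.card * L^2 := by rw [Finset.sum_const, nsmul_eq_mul]
  have htr0 : 0 ≤ (Sig T).trace := by
    rw [trace_eq_sum_eig (hpos T).isHermitian]
    exact Finset.sum_nonneg fun i _ => ((hpos T).eigenvalues_pos i).le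
  have hup : (Sig T).det ≤ ((lam * d + C.card * L^2)/d)^d := by
    calc (Sig T).det ≤ ((Sig T).trace / d)^d := det_le_trace_pow hd (hpos T)
      _ ≤ ((lam * d + C.card * L^2)/d)^d := by
          apply pow_le_pow_left₀ (by positivity)
          exact div_le_div_of_nonneg_right htrb hd0.le
  -- convert to logs
  set n : ℝ := (C.card : ℝ) with hn
  have hcancel : lam * (1 + n*L^2*B^2/d) = (lam * d + n * L^2)/d := by
    rw [hlam]
    field_simp
  have hkey : ((1:ℝ)+Γ^2) ^ C.card ≤ (1 + n*L^2*B^2/d)^d := by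
    have h1 : lam^d * (1+Γ^2)^C.card ≤ lam^d * (1 + n*L^2*B^2/d)^d := by
      calc lam^d * (1+Γ^2)^C.card ≤ (Sig T).det := hlow
        _ ≤ ((lam*d + n*L^2)/d)^d := hup
        _ = (lam * (1 + n*L^2*B^2/d))^d := by rw [hcancel]
        _ = lam^d * (1 + n*L^2*B^2/d)^d := mul_pow _ _ _
    exact le_of_mul_le_mul_left h1 (pow_pos hlam0 d)
  have hxpos : (0:ℝ) < 1 + n*L^2*B^2/d := by positivity
  have hlog : n * Real.log (1+Γ^2) ≤ (d:ℝ) * Real.log (1 + n*L^2*B^2/d) := by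
    have h2 := Real.log_le_log (by positivity) hkey
    rwa [Real.log_pow, Real.log_pow] at h2
  have hΓlog : Γ^2/2 ≤ Real.log (1+Γ^2) := by
    have h1 := Real.log_le_sub_one_of_pos (show (0:ℝ) < (1+Γ^2)⁻¹ by positivity)
    rw [Real.log_inv] at h1
    have hΓ21 : Γ^2 ≤ 1 := by nlinarith
    have e : (1+Γ^2) * (1+Γ^2)⁻¹ = 1 := mul_inv_cancel₀ (by positivity)
    have h2 : (1+Γ^2)⁻¹ ≤ 1 - Γ^2/2 := by
      nlinarith [e, mul_nonneg hΓ2.le (sub_nonneg.mpr hΓ21),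
        inv_nonneg.mpr (show (0:ℝ) ≤ 1+Γ^2 by positivity)]
    linarith
  have hfinal : n * Γ^2 / 2 ≤ (d:ℝ) * Real.log (1 + n*L^2*B^2/d) := by
    have h3 : n * (Γ^2/2) ≤ n * Real.log (1+Γ^2) :=
      mul_le_mul_of_nonneg_left hΓlog (Nat.cast_nonneg _)
    calc n*Γ^2/2 = n * (Γ^2/2) := by ring
      _ ≤ n * Real.log (1+Γ^2) := h3
      _ ≤ (d:ℝ) * Real.log (1 + n*L^2*B^2/d) := hlog
  exact arith_final (d:ℝ) n Γ L B (by exact_mod_cast hd) (Nat.cast_nonneg _) hΓ0 hΓ1 hL hB hfinal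
end

section
/- Let $\theta^*, \hat{\theta} \in \mathbb{R}^d$, $\Sigma$ positive definite with $\|\hat{\theta} - \theta^*\|_{\Sigma} \le \beta$. Fix vectors $\phi^*, \phi^1, \phi^2 \in \mathbb{R}^d$ and suppose $\langle\hat{\theta}, \phi^1 - \phi^2\rangle + \beta\|\phi^1 - \phi^2\|_{\Sigma^{-1}} \ge \langle\hat{\theta}, \phi^* - \phi^2\rangle + \beta\|\phi^* - \phi^2\|_{\Sigma^{-1}}$ (the action $\phi^1$ maximizes the optimistic index). Then $\langle\theta^*, \phi^* - \phi^1\rangle \le 2\beta\|\phi^1 - \phi^2\|_{\Sigma^{-1}}$. -/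
open Matrix

private lemma symmQ {d : ℕ} {S : Matrix (Fin d) (Fin d) ℝ} (hS : S.IsHermitian)
    (x y : Fin d → ℝ) : x ⬝ᵥ S *ᵥ y = y ⬝ᵥ S *ᵥ x := by
  rw [dotProduct_mulVec, ← mulVec_transpose]
  have : Sᵀ = S := by
    have := hS.eq; rwa [conjTranspose_eq_transpose_of_trivial] at this
  rw [this, dotProduct_comm]

private lemma csPSD {d : ℕ} {S : Matrix (Fin d) (Fin d) ℝ} (hS : S.PosSemidef)
    (x y : Fin d → ℝ) :
    (x ⬝ᵥ S *ᵥ y)^2 ≤ (x ⬝ᵥ S *ᵥ x) * (y ⬝ᵥ S *ᵥ y) := by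
  have h : ∀ t : ℝ, 0 ≤ (y ⬝ᵥ S *ᵥ y) * (t*t) + (2 * (x ⬝ᵥ S *ᵥ y)) * t + (x ⬝ᵥ S *ᵥ x) := by
    intro t
    have h0 := hS.dotProduct_mulVec_nonneg (x + t • y)
    have hsym := symmQ hS.1 x y
    simp only [star_trivial, dotProduct_add, add_dotProduct, mulVec_add, mulVec_smul,
      dotProduct_smul, smul_dotProduct, smul_eq_mul] at h0
    rw [hsym] at h0 ⊢; nlinarith [h0]
  have := discrim_le_zero h
  simp only [discrim] at this
  nlinarith [this]

private lemma csBound {d : ℕ} {S : Matrix (Fin d) (Fin d) ℝ} (hS : S.PosDef)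
    (a v : Fin d → ℝ) :
    |a ⬝ᵥ v| ≤ Real.sqrt (a ⬝ᵥ S *ᵥ a) * Real.sqrt (v ⬝ᵥ S⁻¹ *ᵥ v) := by
  have h1 : S *ᵥ (S⁻¹ *ᵥ v) = v := by
    rw [mulVec_mulVec, Matrix.mul_nonsing_inv _ (isUnit_iff_ne_zero.mpr hS.det_pos.ne'), one_mulVec]
  have key : (a ⬝ᵥ v)^2 ≤ (a ⬝ᵥ S *ᵥ a) * (v ⬝ᵥ S⁻¹ *ᵥ v) := by
    have h := csPSD hS.posSemidef a (S⁻¹ *ᵥ v)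
    rw [h1, dotProduct_comm (S⁻¹ *ᵥ v) v] at h
    exact h
  have hna : 0 ≤ a ⬝ᵥ S *ᵥ a := by simpa using hS.posSemidef.dotProduct_mulVec_nonneg a
  calc |a ⬝ᵥ v| = Real.sqrt ((a ⬝ᵥ v)^2) := (Real.sqrt_sq_eq_abs _).symm
    _ ≤ Real.sqrt ((a ⬝ᵥ S *ᵥ a) * (v ⬝ᵥ S⁻¹ *ᵥ v)) := Real.sqrt_le_sqrt key
    _ = _ := Real.sqrt_mul hna _

theorem stmt_15 (d : ℕ) (θs θh : Fin d → ℝ)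
    (S : Matrix (Fin d) (Fin d) ℝ) (hS : S.PosDef) (β : ℝ)
    (hβ : Real.sqrt ((θh - θs) ⬝ᵥ S *ᵥ (θh - θs)) ≤ β)
    (φs φ1 φ2 : Fin d → ℝ)
    (hmax : θh ⬝ᵥ (φ1 - φ2) + β * Real.sqrt ((φ1 - φ2) ⬝ᵥ S⁻¹ *ᵥ (φ1 - φ2)) ≥
      θh ⬝ᵥ (φs - φ2) + β * Real.sqrt ((φs - φ2) ⬝ᵥ S⁻¹ *ᵥ (φs - φ2))) :
    θs ⬝ᵥ (φs - φ1) ≤ 2 * β * Real.sqrt ((φ1 - φ2) ⬝ᵥ S⁻¹ *ᵥ (φ1 - φ2)) := by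
  set a := θh - θs with ha
  have hb : ∀ w : Fin d → ℝ, |a ⬝ᵥ w| ≤ β * Real.sqrt (w ⬝ᵥ S⁻¹ *ᵥ w) := by
    intro w
    refine (csBound hS a w).trans ?_
    exact mul_le_mul_of_nonneg_right hβ (Real.sqrt_nonneg _)
  have h1 := abs_le.mp (hb (φs - φ2))
  have h2 := abs_le.mp (hb (φ1 - φ2))
  have heq : θs ⬝ᵥ (φs - φ1) =
      θh ⬝ᵥ (φs - φ2) - θh ⬝ᵥ (φ1 - φ2) - a ⬝ᵥ (φs - φ2) + a ⬝ᵥ (φ1 - φ2) := by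
    simp only [ha, sub_dotProduct, dotProduct_sub]; ring
  have hns : 0 ≤ Real.sqrt ((φs - φ2) ⬝ᵥ S⁻¹ *ᵥ (φs - φ2)) := Real.sqrt_nonneg _
  linarith [h1.1, h1.2, h2.1, h2.2, hmax, mul_nonneg (le_trans (Real.sqrt_nonneg _) hβ) hns]
end
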